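/- arXiv:1903.01342 — 3 statements merged into one kernel-verified Lean document; each statement's English description precedes it below -/
import Mathlib

section
/- Let G be a finite connected graph with n vertices and minimum degree δ. Then for any integer x with 1 ≤ x ≤ n and any vertex u, the number of vertices at distance at most x from u is at least min{δ·x/3, n}. -/
open Finset

/-- If `dist z v = d + 1`, there is a neighbor of `z` at distance `d` from `v`. -/
lemma step_lemma {V : Type*} (G : SimpleGraph V) (hconn : G.Connected)
    {z v : V} {d : ℕ} (h : G.dist z v = d + 1) :
    ∃ b, G.Adj z b ∧ G.dist b v = d := by
  obtain ⟨p, hp⟩ := (hconn z v).exists_walk_length_eq_dist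
  rw [h] at hp
  cases p with
  | nil => simp at hp
  | cons hzb q =>
    rename_i b
    refine ⟨b, hzb, le_antisymm ?_ ?_⟩
    · have := SimpleGraph.dist_le q
      simp only [SimpleGraph.Walk.length_cons] at hp
      omega
    · have htri := hconn.dist_triangle (u := z) (v := b) (w := v)
      have h1 : G.dist z b = 1 := SimpleGraph.dist_eq_one_iff_adj.mpr hzb
      omega

/-- Vertices at every intermediate distance exist. -/
lemma exists_dist_eq' {V : Type*} (G : SimpleGraph V) (hconn : G.Connected)
    (u w : V) : ∀ i ≤ G.dist u w, ∃ z, G.dist u z = i ∧ G.dist z w = G.dist u w - i := by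
  intro i
  induction i with
  | zero => intro _; exact ⟨u, by simp⟩
  | succ n ih =>
    intro hn
    obtain ⟨z, hz1, hz2⟩ := ih (by omega)
    have hd : G.dist z w = (G.dist u w - (n + 1)) + 1 := by omega
    obtain ⟨b, hadj, hb⟩ := step_lemma G hconn hd
    refine ⟨b, le_antisymm ?_ ?_, hb⟩
    · have htri := hconn.dist_triangle (u := u) (v := z) (w := b)
      have h1 : G.dist z b = 1 := SimpleGraph.dist_eq_one_iff_adj.mpr hadj
      omega
    · have htri := hconn.dist_triangle (u := u) (v := b) (w := w)
      omega

theorem stmt_0 {V : Type*} [Fintype V] [DecidableEq V] (G : SimpleGraph V)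
    [DecidableRel G.Adj] (hconn : G.Connected)
    (x : ℕ) (hx1 : 1 ≤ x) (hxn : x ≤ Fintype.card V) (u : V) :
    min ((G.minDegree * x : ℝ) / 3) (Fintype.card V) ≤
      ((Finset.univ.filter (fun v => G.dist u v ≤ x)).card : ℝ) := by
  by_cases hall : ∀ w, G.dist u w ≤ x
  · have : (Finset.univ.filter (fun v => G.dist u v ≤ x)) = Finset.univ := by
      apply Finset.filter_true_of_mem; intro v _; exact hall v
    rw [this, Finset.card_univ]
    exact min_le_right _ _
  · push_neg at hall
    obtain ⟨w, hw⟩ := hall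
    set B := Finset.univ.filter (fun v => G.dist u v ≤ x) with hB
    set m := (x + 2) / 3 with hm
    have hmod := Nat.div_add_mod (x + 2) 3
    have hmodlt : (x + 2) % 3 < 3 := Nat.mod_lt _ (by norm_num)
    set T : ℕ → Finset V := fun k =>
      Finset.univ.filter (fun v => 3 * k - 1 ≤ G.dist u v ∧ G.dist u v ≤ 3 * k + 1) with hT
    -- each T k for k < m has at least minDegree + 1 elements
    have hTcard : ∀ k < m, G.minDegree + 1 ≤ (T k).card := by
      intro k hk
      obtain ⟨z, hz, -⟩ := exists_dist_eq' G hconn u w (3 * k) (by omega)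
      have hsub : insert z (G.neighborFinset z) ⊆ T k := by
        intro y hy
        simp only [Finset.mem_insert, SimpleGraph.mem_neighborFinset] at hy
        simp only [hT, Finset.mem_filter, Finset.mem_univ, true_and]
        rcases hy with rfl | hadj
        · omega
        · have h1 : G.dist z y = 1 := SimpleGraph.dist_eq_one_iff_adj.mpr hadj
          have t1 := hconn.dist_triangle (u := u) (v := z) (w := y)
          have t2 := hconn.dist_triangle (u := u) (v := y) (w := z)
          have h2 : G.dist y z = 1 := SimpleGraph.dist_eq_one_iff_adj.mpr hadj.symm
          omega
      calc G.minDegree + 1 ≤ G.degree z + 1 := by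
            have := G.minDegree_le_degree z; omega
        _ = (insert z (G.neighborFinset z)).card := by
            rw [Finset.card_insert_of_notMem (by simp), SimpleGraph.card_neighborFinset_eq_degree]
        _ ≤ (T k).card := Finset.card_le_card hsub
    -- the T k are pairwise disjoint and contained in B
    have hdisj : ∀ k1 ∈ Finset.range m, ∀ k2 ∈ Finset.range m, k1 ≠ k2 →
        Disjoint (T k1) (T k2) := by
      intro k1 _ k2 _ hne
      rw [Finset.disjoint_left]
      intro a ha1 ha2
      simp only [hT, Finset.mem_filter] at ha1 ha2
      omega
    have hsubB : (Finset.range m).biUnion T ⊆ B := by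
      intro a ha
      simp only [Finset.mem_biUnion, Finset.mem_range] at ha
      obtain ⟨k, hk, hak⟩ := ha
      simp only [hT, Finset.mem_filter] at hak
      simp only [hB, Finset.mem_filter, Finset.mem_univ, true_and]
      omega
    have hcount : m * (G.minDegree + 1) ≤ B.card := by
      calc m * (G.minDegree + 1) = ∑ k ∈ Finset.range m, (G.minDegree + 1) := by
            rw [Finset.sum_const, Finset.card_range, smul_eq_mul]
        _ ≤ ∑ k ∈ Finset.range m, (T k).card :=
            Finset.sum_le_sum (fun k hk => hTcard k (Finset.mem_range.mp hk))
        _ = ((Finset.range m).biUnion T).card := (Finset.card_biUnion hdisj).symm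
        _ ≤ B.card := Finset.card_le_card hsubB
    have hkey : G.minDegree * x ≤ 3 * B.card := by
      have h3m : x ≤ 3 * m := by omega
      calc G.minDegree * x ≤ G.minDegree * (3 * m) := Nat.mul_le_mul_left _ h3m
        _ ≤ 3 * (m * (G.minDegree + 1)) := by ring_nf; nlinarith
        _ ≤ 3 * B.card := by omega
    have : ((G.minDegree * x : ℕ) : ℝ) / 3 ≤ (B.card : ℝ) := by
      rw [div_le_iff₀ (by norm_num)]
      calc ((G.minDegree * x : ℕ) : ℝ) ≤ ((3 * B.card : ℕ) : ℝ) := by exact_mod_cast hkey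
        _ = (B.card : ℝ) * 3 := by push_cast; ring
    refine le_trans (min_le_left _ _) ?_
    push_cast at this ⊢
    linarith
end

section
/- Let G be a finite connected graph with m edges and minimum degree δ, let π(u) = d_u/(2m), and let P be the lazy random walk transition matrix on G. Let f : V → ℝ be a nonnegative function with E_π[f] = 1 and Var_π(f) = ε > 0. If x maximizes f and y is a vertex at shortest-path distance ℓ from x with f(y) ≤ 1 + ε/2, then E_P(f,f) ≥ (ε/2)²/(4mℓ). -/
open Finset

/-- Transition matrix of the lazy random walk on a graph. -/
noncomputable def lazyWalk {V : Type*} [Fintype V] [DecidableEq V]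
    (G : SimpleGraph V) [DecidableRel G.Adj] : V → V → ℝ :=
  fun u v => if u = v then 1/2 else if G.Adj u v then 1/(2 * G.degree u) else 0

lemma telescope_aux {V : Type*} {G : SimpleGraph V} (f : V → ℝ) {u v : V} (p : G.Walk u v) :
    (p.darts.map (fun d => f d.toProd.1 - f d.toProd.2)).sum = f u - f v := by
  induction p with
  | nil => simp
  | cons h q ih => simp [SimpleGraph.Walk.darts_cons, ih]

theorem stmt_5 {V : Type*} [Fintype V] [DecidableEq V] (G : SimpleGraph V)
    [DecidableRel G.Adj] (hconn : G.Connected)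
    (m : ℕ) (hm : m = G.edgeFinset.card)
    (δ : ℕ) (hδ : δ = G.minDegree)
    (π : V → ℝ) (hπ : ∀ u, π u = (G.degree u : ℝ) / (2 * m))
    (f : V → ℝ) (hf0 : ∀ u, 0 ≤ f u)
    (hmean : ∑ u, f u * π u = 1)
    (ε : ℝ) (hε : 0 < ε) (hvar : ∑ u, (f u - 1) ^ 2 * π u = ε)
    (x y : V) (hx : ∀ z, f z ≤ f x)
    (ℓ : ℕ) (hℓ : G.dist x y = ℓ) (hy : f y ≤ 1 + ε / 2) :
    (ε / 2) ^ 2 / (4 * m * ℓ) ≤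
      (1/2) * ∑ u, ∑ v, (f u - f v) ^ 2 * π u * lazyWalk G u v := by
  classical
  -- m is positive
  have hm0 : m ≠ 0 := by
    intro h
    have h1 : (1:ℝ) = 0 := by
      rw [← hmean]
      apply Finset.sum_eq_zero
      intro u _
      rw [hπ u, h]
      simp
    norm_num at h1
  have hmR : (0:ℝ) < m := by exact_mod_cast Nat.pos_of_ne_zero hm0
  have hπ0 : ∀ u, 0 ≤ π u := fun u => by rw [hπ]; positivity
  -- π sums to 1
  have hsumdeg : ∑ u, (G.degree u : ℝ) = 2 * m := by
    rw [hm]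
    exact_mod_cast G.sum_degrees_eq_twice_card_edges
  have hsumπ : ∑ u, π u = 1 := by
    simp only [hπ]
    rw [← Finset.sum_div, hsumdeg, div_self (by positivity)]
  -- f x ≥ 1 + ε
  have hzero : ∑ u, (f u - 1) * π u = 0 := by
    have h1 : ∑ u, (f u - 1) * π u = ∑ u, f u * π u - ∑ u, π u := by
      rw [← Finset.sum_sub_distrib]
      exact Finset.sum_congr rfl fun u _ => by ring
    rw [h1, hmean, hsumπ]; ring
  have hεle : ε ≤ f x - 1 := by
    have h1 : ∑ u, (f u - 1) ^ 2 * π u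
        = (∑ u, f u * (f u - 1) * π u) - ∑ u, (f u - 1) * π u := by
      rw [← Finset.sum_sub_distrib]
      exact Finset.sum_congr rfl fun u _ => by ring
    have h2 : ∑ u, f u * (f u - 1) * π u ≤ ∑ u, f u * (f x - 1) * π u := by
      apply Finset.sum_le_sum
      intro u _
      have h := mul_le_mul_of_nonneg_left (by linarith [hx u] : f u - 1 ≤ f x - 1) (hf0 u)
      exact mul_le_mul_of_nonneg_right h (hπ0 u)
    have h3 : ∑ u, f u * (f x - 1) * π u = f x - 1 := by
      have : ∑ u, f u * (f x - 1) * π u = (f x - 1) * ∑ u, f u * π u := by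
        rw [Finset.mul_sum]
        exact Finset.sum_congr rfl fun u _ => by ring
      rw [this, hmean]; ring
    calc ε = ∑ u, (f u - 1) ^ 2 * π u := hvar.symm
      _ = (∑ u, f u * (f u - 1) * π u) - ∑ u, (f u - 1) * π u := h1
      _ = ∑ u, f u * (f u - 1) * π u := by rw [hzero]; ring
      _ ≤ ∑ u, f u * (f x - 1) * π u := h2
      _ = f x - 1 := h3
  have hxy : ε / 2 ≤ f x - f y := by linarith
  have hne : x ≠ y := by
    intro h; rw [h] at hεle; linarith
  have hℓpos : 0 < ℓ := hℓ ▸ hconn.pos_dist_of_ne hne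
  have hℓR : (0:ℝ) < ℓ := by exact_mod_cast hℓpos
  -- shortest path
  obtain ⟨p, hp, hplen⟩ := hconn.exists_path_of_dist x y
  rw [hℓ] at hplen
  have hnd : p.darts.Nodup := by
    have := hp.edges_nodup
    rw [SimpleGraph.Walk.edges] at this
    exact this.of_map _
  set s : Finset G.Dart := p.darts.toFinset with hs
  have hcard : s.card = ℓ := by
    rw [hs, List.toFinset_card_of_nodup hnd, SimpleGraph.Walk.length_darts, hplen]
  set g : G.Dart → ℝ := fun d => f d.toProd.1 - f d.toProd.2 with hg
  have htel : ∑ d ∈ s, g d = f x - f y := by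
    rw [hs, List.sum_toFinset _ hnd]
    exact telescope_aux f p
  set S : ℝ := ∑ d ∈ s, g d ^ 2 with hS
  have hSnn : 0 ≤ S := Finset.sum_nonneg fun d _ => sq_nonneg _
  have hCS : (f x - f y) ^ 2 ≤ ℓ * S := by
    rw [← htel]
    calc (∑ d ∈ s, g d) ^ 2 ≤ s.card * ∑ d ∈ s, g d ^ 2 :=
          sq_sum_le_card_mul_sum_sq
      _ = ℓ * S := by rw [hcard]
  -- pointwise identity for the Dirichlet form terms
  have hterm : ∀ u v, (f u - f v) ^ 2 * π u * lazyWalk G u v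
      = if G.Adj u v then (f u - f v) ^ 2 / (4 * m) else 0 := by
    intro u v
    by_cases huv : u = v
    · subst huv
      simp [lazyWalk, G.irrefl]
    · by_cases ha : G.Adj u v
      · have hd : (0:ℝ) < G.degree u := by
          exact_mod_cast G.degree_pos_iff_exists_adj u |>.mpr ⟨v, ha⟩
        simp only [lazyWalk, if_neg huv, if_pos ha, hπ]
        field_simp
        ring
      · simp [lazyWalk, huv, ha]
  -- the doubled dart set
  set s' : Finset G.Dart := s ∪ s.image SimpleGraph.Dart.symm with hs'
  have hdisj : Disjoint s (s.image SimpleGraph.Dart.symm) := by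
    rw [Finset.disjoint_left]
    intro d hd hd'
    obtain ⟨e, he, rfl⟩ := Finset.mem_image.mp hd'
    have hmem1 : e ∈ p.darts := List.mem_toFinset.mp he
    have hmem2 : e.symm ∈ p.darts := List.mem_toFinset.mp hd
    have hinj := List.inj_on_of_nodup_map (f := SimpleGraph.Dart.edge)
      (by rw [← SimpleGraph.Walk.edges]; exact hp.edges_nodup)
    have : e.symm = e := hinj hmem2 hmem1 (SimpleGraph.Dart.edge_symm e)
    exact e.symm_ne this
  have hsum_s' : ∑ d ∈ s', g d ^ 2 / (4 * m) = 2 * (S / (4 * m)) := by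
    rw [hs', Finset.sum_union hdisj]
    have himg : ∑ d ∈ s.image SimpleGraph.Dart.symm, g d ^ 2 / (4 * m)
        = ∑ d ∈ s, g d ^ 2 / (4 * m) := by
      rw [Finset.sum_image (fun a _ b _ h =>
        SimpleGraph.Dart.symm_involutive.injective h)]
      apply Finset.sum_congr rfl
      intro d _
      have : g d.symm = -(g d) := by
        simp [hg, SimpleGraph.Dart.symm_toProd]
      rw [this]
      ring
    rw [himg, ← Finset.sum_div, hS]
    ring
  -- lower bound on the Dirichlet form
  have hmain : S / (4 * m) ≤ (1/2) * ∑ u, ∑ v, (f u - f v) ^ 2 * π u * lazyWalk G u v := by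
    have hrw : ∑ u, ∑ v, (f u - f v) ^ 2 * π u * lazyWalk G u v
        = ∑ q ∈ Finset.univ ×ˢ Finset.univ,
            (if G.Adj q.1 q.2 then (f q.1 - f q.2) ^ 2 / (4 * m) else 0) := by
      rw [← Finset.sum_product']
      exact Finset.sum_congr rfl fun q _ => hterm q.1 q.2
    have himg : ∑ q ∈ s'.image SimpleGraph.Dart.toProd,
          (if G.Adj q.1 q.2 then (f q.1 - f q.2) ^ 2 / (4 * m) else 0)
        = ∑ d ∈ s', g d ^ 2 / (4 * m) := by
      rw [Finset.sum_image (fun a _ b _ h => SimpleGraph.Dart.toProd_injective h)]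
      apply Finset.sum_congr rfl
      intro d _
      rw [if_pos d.adj]
    have hle : ∑ q ∈ s'.image SimpleGraph.Dart.toProd,
          (if G.Adj q.1 q.2 then (f q.1 - f q.2) ^ 2 / (4 * m) else 0)
        ≤ ∑ q ∈ Finset.univ ×ˢ Finset.univ,
            (if G.Adj q.1 q.2 then (f q.1 - f q.2) ^ 2 / (4 * m) else 0) := by
      apply Finset.sum_le_sum_of_subset_of_nonneg
      · intro q _; simp [Finset.mem_product]
      · intro q _ _
        split_ifs
        · positivity
        · exact le_rfl
    rw [hrw]
    calc S / (4 * m) = (1/2) * (2 * (S / (4 * m))) := by ring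
      _ = (1/2) * ∑ q ∈ s'.image SimpleGraph.Dart.toProd,
            (if G.Adj q.1 q.2 then (f q.1 - f q.2) ^ 2 / (4 * m) else 0) := by
          rw [himg, hsum_s']
      _ ≤ _ := by
          apply mul_le_mul_of_nonneg_left hle (by norm_num)
  -- final arithmetic
  have hfinal : (ε / 2) ^ 2 / (4 * m * ℓ) ≤ S / (4 * m) := by
    rw [div_le_div_iff₀ (by positivity) (by positivity)]
    have h1 : (ε / 2) ^ 2 ≤ (f x - f y) ^ 2 := by
      apply pow_le_pow_left₀ (by positivity) hxy
    nlinarith [hCS, hℓR, hmR]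
  linarith
end

section
/- Let P⁽¹⁾, …, P⁽ᵗ⁾ be transition matrices of lazy random walks on graphs G⁽¹⁾, …, G⁽ᵗ⁾ on the same vertex set V, each with m edges and each having the same stationary distribution π. Suppose u ∈ V, and for each i the neighbors of u in G⁽ⁱ⁾ satisfy π(v) = α_u d_v/(2m) for a constant α_u with π(u) = α_u d_u/(2m). Let p⁽⁰⁾ be a probability distribution, ρ⁽ⁱ⁾ = (p⁽⁰⁾P⁽¹⁾⋯P⁽ⁱ⁾)/π, and suppose |ρ⁽ᵗ⁾(u) − ρ⁽⁰⁾(u)| ≥ ε > 0. Then Var_π(ρ⁽⁰⁾) − Var_π(ρ⁽ᵗ⁾) ≥ (α_u/(4m)) Σ_{i=1}^{t} Σ_{v ∼_i u} (ρ^{(i−1)}(u) − ρ^{(i−1)}(v))² ≥ 2ε²π(u)/t. -/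
open Finset

/-!
Write `f = ρ⁽ⁱ⁻¹⁾` and `g = ρ⁽ⁱ⁾`. Then `g(w) = ∑ᵥ q_w(v) f(v)`, where
`q_w(v) = π(v) P(v,w) / π(w)` is the time reversal of `P = P⁽ⁱ⁾`, a probability vector because
`π` is stationary. As `P` is stochastic, `f` and `g` have the same `π`-mean, and
`Var_π f - Var_π g = ∑_w π(w) Var_{q_w}(f)`. Keeping in `Var_{q_u}` and in each `Var_{q_v}`,
`v ∼ u`, only the pair `{u, v}`, and using laziness `q_w(w) = 1/2` together with
`π(u) P(u,v) = π(v) P(v,u) = α/(4m)`, gives the first inequality after telescoping over `i`.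

For the second, `g(u) - f(u)` is half the average of `f(v) - f(u)` over the `d_u` neighbours
`v` of `u`, so Cauchy–Schwarz bounds `2 π(u) (g(u) - f(u))²` by the edge sum of step `i`; a
second Cauchy–Schwarz over the `t` steps turns the gap `ε` into `2 ε² π(u) / t`.
-/

section WeightedVariance

variable {V : Type*} [Fintype V]

def weightedVariance (q f : V → ℝ) : ℝ :=
  ∑ w, (f w - ∑ z, f z * q z) ^ 2 * q w

lemma weightedVariance_eq_sum_sq_sub {q : V → ℝ} (hq : ∑ v, q v = 1) (f : V → ℝ) :
    weightedVariance q f = ∑ v, f v ^ 2 * q v - (∑ v, f v * q v) ^ 2 := by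
  unfold weightedVariance
  set mean := ∑ v, f v * q v
  have h : ∀ w, (f w - mean) ^ 2 * q w
      = f w ^ 2 * q w - 2 * mean * (f w * q w) + mean ^ 2 * q w :=
    fun w => by ring
  simp only [h, sum_add_distrib, sum_sub_distrib, ← mul_sum, hq]
  ring

lemma sum_sum_mul_sq_sub_eq_two_mul_weightedVariance {q : V → ℝ} (hq : ∑ v, q v = 1)
    (f : V → ℝ) :
    ∑ x, ∑ y, q x * q y * (f x - f y) ^ 2 = 2 * weightedVariance q f := by
  have h : ∀ x y, q x * q y * (f x - f y) ^ 2
      = f x ^ 2 * q x * q y + q x * (f y ^ 2 * q y) - 2 * (f x * q x) * (f y * q y) :=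
    fun x y => by ring
  simp only [h, sum_add_distrib, sum_sub_distrib, ← mul_sum, ← sum_mul, hq,
    weightedVariance_eq_sum_sq_sub hq]
  ring

lemma mul_sum_sq_le_weightedVariance {q : V → ℝ} (hq0 : ∀ v, 0 ≤ q v) (hq : ∑ v, q v = 1)
    (f : V → ℝ) {a : V} {S : Finset V} (ha : a ∉ S) :
    q a * ∑ b ∈ S, q b * (f a - f b) ^ 2 ≤ weightedVariance q f := by
  classical
  set T : V → V → ℝ := fun x y => q x * q y * (f x - f y) ^ 2
  have hT : ∀ x y, 0 ≤ T x y := fun x y =>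
    mul_nonneg (mul_nonneg (hq0 x) (hq0 y)) (sq_nonneg _)
  have hrow : ∀ x, 0 ≤ ∑ y, T x y := fun x => sum_nonneg fun y _ => hT x y
  have : 2 * (q a * ∑ b ∈ S, q b * (f a - f b) ^ 2) ≤ ∑ x, ∑ y, T x y :=
    calc 2 * (q a * ∑ b ∈ S, q b * (f a - f b) ^ 2)
        = ∑ y ∈ S, T a y + ∑ x ∈ S, T x a := by
          rw [two_mul, mul_sum, ← sum_add_distrib, ← sum_add_distrib]
          exact sum_congr rfl fun b _ => by ring
      _ ≤ ∑ y, T a y + ∑ x ∈ S, ∑ y, T x y :=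
          add_le_add (sum_le_univ_sum_of_nonneg (hT a))
            (sum_le_sum fun x _ => single_le_sum (fun y _ => hT x y) (mem_univ a))
      _ = ∑ x ∈ insert a S, ∑ y, T x y := by rw [sum_insert ha]
      _ ≤ ∑ x, ∑ y, T x y := sum_le_univ_sum_of_nonneg hrow
  rw [sum_sum_mul_sq_sub_eq_two_mul_weightedVariance hq] at this
  linarith

lemma weightedVariance_nonneg {q : V → ℝ} (hq0 : ∀ v, 0 ≤ q v) (f : V → ℝ) :
    0 ≤ weightedVariance q f :=
  sum_nonneg fun w _ => mul_nonneg (sq_nonneg _) (hq0 w)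

lemma weightedVariance_sub_eq_of_sum_mul_eq {π f g : V → ℝ}
    (hmean : ∑ w, g w * π w = ∑ w, f w * π w) :
    weightedVariance π f - weightedVariance π g = ∑ w, f w ^ 2 * π w - ∑ w, g w ^ 2 * π w := by
  set mean := ∑ w, f w * π w
  have h : ∀ w, (f w - mean) ^ 2 * π w - (g w - mean) ^ 2 * π w
      = f w ^ 2 * π w - g w ^ 2 * π w - 2 * mean * (f w * π w - g w * π w) :=
    fun w => by ring
  rw [weightedVariance, weightedVariance, hmean, ← sum_sub_distrib,
    sum_congr rfl fun w _ => h w, sum_sub_distrib, sum_sub_distrib, ← mul_sum, sum_sub_distrib,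
    hmean, sub_self, mul_zero, sub_zero]

end WeightedVariance

section Kernel

variable {V : Type*} {K : V → V → ℝ} {π : V → ℝ}

noncomputable def timeReversal (K : V → V → ℝ) (π : V → ℝ) (w v : V) : ℝ :=
  π v * K v w / π w

lemma timeReversal_nonneg (hK : ∀ v w, 0 ≤ K v w) (hπ : ∀ v, 0 < π v) (w v : V) :
    0 ≤ timeReversal K π w v :=
  div_nonneg (mul_nonneg (hπ v).le (hK v w)) (hπ w).le

lemma mul_timeReversal {w : V} (hw : π w ≠ 0) (v : V) :
    π w * timeReversal K π w v = π v * K v w :=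
  mul_div_cancel₀ _ hw

lemma timeReversal_self {w : V} (hw : π w ≠ 0) : timeReversal K π w w = K w w :=
  mul_div_cancel_left₀ _ hw

variable [Fintype V]

lemma sum_timeReversal (hstat : ∀ w, ∑ v, π v * K v w = π w) {w : V} (hw : π w ≠ 0) :
    ∑ v, timeReversal K π w v = 1 := by
  simp only [timeReversal, ← sum_div, hstat w, div_self hw]

lemma sum_mul_eq_of_step {f g : V → ℝ} (hg : ∀ w, g w * π w = ∑ v, f v * π v * K v w)
    (hrow : ∀ v, ∑ w, K v w = 1) :
    ∑ w, g w * π w = ∑ w, f w * π w := by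
  simp only [hg, sum_comm (γ := V) (α := V), ← mul_sum, hrow, mul_one]

lemma sum_mul_timeReversal_eq_of_step {f g : V → ℝ}
    (hg : ∀ w, g w * π w = ∑ v, f v * π v * K v w) {w : V} (hw : π w ≠ 0) :
    ∑ v, f v * timeReversal K π w v = g w := by
  simp only [timeReversal, mul_div_assoc', ← mul_assoc, ← sum_div, ← hg,
    mul_div_cancel_right₀ _ hw]

lemma sum_sq_mul_sub_sum_sq_mul_eq_of_step {f g : V → ℝ}
    (hg : ∀ w, g w * π w = ∑ v, f v * π v * K v w) (hπ : ∀ w, π w ≠ 0)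
    (hstat : ∀ w, ∑ v, π v * K v w = π w) (hrow : ∀ v, ∑ w, K v w = 1) :
    ∑ w, f w ^ 2 * π w - ∑ w, g w ^ 2 * π w
      = ∑ w, weightedVariance (timeReversal K π w) f * π w := by
  have hsecond : ∑ w, (∑ v, f v ^ 2 * timeReversal K π w v) * π w = ∑ v, f v ^ 2 * π v := by
    calc ∑ w, (∑ v, f v ^ 2 * timeReversal K π w v) * π w
        = ∑ w, ∑ v, f v ^ 2 * (π w * timeReversal K π w v) :=
          sum_congr rfl fun w _ => by rw [sum_mul]; exact sum_congr rfl fun v _ => by ring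
      _ = ∑ v, f v ^ 2 * π v := by
          simp only [mul_timeReversal (hπ _)]
          rw [sum_comm]
          simp only [← mul_sum, hrow, mul_one]
  simp only [weightedVariance_eq_sum_sq_sub (sum_timeReversal hstat (hπ _)),
    sum_mul_timeReversal_eq_of_step hg (hπ _), sub_mul, sum_sub_distrib, hsecond]

lemma sum_pair_le_sum_weightedVariance (hK : ∀ v w, 0 ≤ K v w) (hπ : ∀ v, 0 < π v)
    (hstat : ∀ w, ∑ v, π v * K v w = π w) (f : V → ℝ) {u : V} {S : Finset V} (hu : u ∉ S) :
    ∑ v ∈ S, (K u u * (π v * K v u) + K v v * (π u * K u v)) * (f u - f v) ^ 2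
      ≤ ∑ w, weightedVariance (timeReversal K π w) f * π w := by
  classical
  have hq0 := timeReversal_nonneg hK hπ
  have hq1 : ∀ w, ∑ v, timeReversal K π w v = 1 := fun w => sum_timeReversal hstat (hπ w).ne'
  have hat : ∀ {w : V} {T : Finset V}, w ∉ T →
      K w w * ∑ v ∈ T, π v * K v w * (f w - f v) ^ 2
        ≤ weightedVariance (timeReversal K π w) f * π w := by
    intro w T hw
    have h := mul_le_mul_of_nonneg_left (mul_sum_sq_le_weightedVariance (hq0 w) (hq1 w) f hw)
      (hπ w).le
    calc K w w * ∑ v ∈ T, π v * K v w * (f w - f v) ^ 2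
        = π w * (timeReversal K π w w * ∑ v ∈ T, timeReversal K π w v * (f w - f v) ^ 2) := by
          rw [timeReversal_self (hπ w).ne', mul_sum, mul_sum, mul_sum]
          refine sum_congr rfl fun v _ => ?_
          rw [← mul_timeReversal (hπ w).ne' v]
          ring
      _ ≤ π w * weightedVariance (timeReversal K π w) f := h
      _ = weightedVariance (timeReversal K π w) f * π w := mul_comm _ _
  calc ∑ v ∈ S, (K u u * (π v * K v u) + K v v * (π u * K u v)) * (f u - f v) ^ 2
      = K u u * ∑ v ∈ S, π v * K v u * (f u - f v) ^ 2
        + ∑ v ∈ S, K v v * ∑ x ∈ {u}, π x * K x v * (f v - f x) ^ 2 := by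
        rw [mul_sum, ← sum_add_distrib]
        refine sum_congr rfl fun v _ => ?_
        rw [sum_singleton]
        ring
    _ ≤ weightedVariance (timeReversal K π u) f * π u
        + ∑ v ∈ S, weightedVariance (timeReversal K π v) f * π v :=
        add_le_add (hat hu) (sum_le_sum fun v hv =>
          hat (notMem_singleton.mpr fun h => hu (h ▸ hv)))
    _ = ∑ w ∈ insert u S, weightedVariance (timeReversal K π w) f * π w := by
        rw [sum_insert hu]
    _ ≤ ∑ w, weightedVariance (timeReversal K π w) f * π w :=
        sum_le_univ_sum_of_nonneg fun w =>
          mul_nonneg (weightedVariance_nonneg (hq0 w) f) (hπ w).le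

lemma sum_pair_le_weightedVariance_sub_of_step (hK : ∀ v w, 0 ≤ K v w) (hπ : ∀ v, 0 < π v)
    (hstat : ∀ w, ∑ v, π v * K v w = π w) (hrow : ∀ v, ∑ w, K v w = 1) {f g : V → ℝ}
    (hg : ∀ w, g w * π w = ∑ v, f v * π v * K v w) {u : V} {S : Finset V} (hu : u ∉ S) :
    ∑ v ∈ S, (K u u * (π v * K v u) + K v v * (π u * K u v)) * (f u - f v) ^ 2
      ≤ weightedVariance π f - weightedVariance π g := by
  rw [weightedVariance_sub_eq_of_sum_mul_eq (sum_mul_eq_of_step hg hrow),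
    sum_sq_mul_sub_sum_sq_mul_eq_of_step hg (fun w => (hπ w).ne') hstat hrow]
  exact sum_pair_le_sum_weightedVariance hK hπ hstat f hu

end Kernel

section LazyWalk

open SimpleGraph

variable {V : Type*} [Fintype V] [DecidableEq V] (G : SimpleGraph V) [DecidableRel G.Adj]

lemma lazyWalk_nonneg (v w : V) : 0 ≤ lazyWalk G v w := by
  unfold lazyWalk
  split_ifs <;> positivity

lemma lazyWalk_self (v : V) : lazyWalk G v v = 1 / 2 := by
  simp [lazyWalk]

variable {G}

lemma lazyWalk_of_adj {v w : V} (h : G.Adj v w) : lazyWalk G v w = 1 / (2 * G.degree v) := by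
  simp [lazyWalk, G.ne_of_adj h, h]

lemma lazyWalk_of_notMem {v w : V} (h : w ∉ insert v (G.neighborFinset v)) :
    lazyWalk G v w = 0 := by
  rw [mem_insert, mem_neighborFinset, not_or] at h
  simp [lazyWalk, Ne.symm h.1, h.2]

lemma lazyWalk_symm_of_notMem {v w : V} (h : w ∉ insert v (G.neighborFinset v)) :
    lazyWalk G w v = 0 := by
  rw [mem_insert, mem_neighborFinset, not_or] at h
  have hadj : ¬G.Adj w v := fun h' => h.2 h'.symm
  simp [lazyWalk, h.1, hadj]

lemma sum_mul_lazyWalk (F : V → ℝ) (v : V) :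
    ∑ x, F x * lazyWalk G x v = F v / 2 + ∑ x ∈ G.neighborFinset v, F x * lazyWalk G x v := by
  rw [← sum_subset (subset_univ _) fun x _ hx => by rw [lazyWalk_symm_of_notMem hx, mul_zero],
    sum_insert (G.notMem_neighborFinset_self v), lazyWalk_self, mul_one_div]

lemma sum_lazyWalk_eq_one {v : V} (hv : 0 < G.degree v) : ∑ w, lazyWalk G v w = 1 := by
  have : (G.degree v : ℝ) ≠ 0 := by positivity
  rw [← sum_subset (subset_univ _) fun w _ => lazyWalk_of_notMem,
    sum_insert (G.notMem_neighborFinset_self v), lazyWalk_self,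
    sum_congr rfl fun w hw => lazyWalk_of_adj ((G.mem_neighborFinset v w).mp hw),
    sum_const, card_neighborFinset_eq_degree, nsmul_eq_mul]
  field_simp
  ring

lemma degree_pos_of_stationary {π : V → ℝ} {v : V} (hv : 0 < π v)
    (hstat : ∑ x, π x * lazyWalk G x v = π v) : 0 < G.degree v := by
  by_contra! h
  have hN : G.neighborFinset v = ∅ := by
    rw [← card_eq_zero, card_neighborFinset_eq_degree]
    omega
  rw [sum_mul_lazyWalk, hN, sum_empty] at hstat
  linarith

variable {π : V → ℝ} {c : ℝ}

lemma mul_lazyWalk_of_adj {v w : V} (h : G.Adj v w) (hv : π v = 2 * c * G.degree v) :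
    π v * lazyWalk G v w = c := by
  have : (G.degree v : ℝ) ≠ 0 := by
    exact_mod_cast ((G.degree_pos_iff_exists_adj v).mpr ⟨w, h⟩).ne'
  rw [lazyWalk_of_adj h, hv]
  field_simp

lemma sum_lazyWalk_eq_one_of_stationary (hπ : ∀ v, 0 < π v)
    (hstat : ∀ w, ∑ v, π v * lazyWalk G v w = π w) (v : V) : ∑ w, lazyWalk G v w = 1 :=
  sum_lazyWalk_eq_one (degree_pos_of_stationary (hπ v) (hstat v))

variable {f g : V → ℝ} {u : V}

lemma lazyWalk_mul_sum_sq_le_weightedVariance_sub (hπ : ∀ v, 0 < π v)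
    (hstat : ∀ w, ∑ v, π v * lazyWalk G v w = π w)
    (hg : ∀ w, g w * π w = ∑ v, f v * π v * lazyWalk G v w) (hcu : π u = 2 * c * G.degree u)
    (hcN : ∀ v ∈ G.neighborFinset u, π v = 2 * c * G.degree v) :
    c * ∑ v ∈ G.neighborFinset u, (f u - f v) ^ 2
      ≤ weightedVariance π f - weightedVariance π g := by
  refine le_trans (le_of_eq ?_) (sum_pair_le_weightedVariance_sub_of_step (lazyWalk_nonneg G)
    hπ hstat (sum_lazyWalk_eq_one_of_stationary hπ hstat) hg (G.notMem_neighborFinset_self u))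
  rw [mul_sum]
  refine sum_congr rfl fun v hv => ?_
  have hadj := (G.mem_neighborFinset u v).mp hv
  rw [lazyWalk_self, lazyWalk_self, mul_lazyWalk_of_adj hadj.symm (hcN v hv),
    mul_lazyWalk_of_adj hadj hcu]
  ring

lemma lazyWalk_two_mul_sq_sub_le (hπu : 0 < π u)
    (hg : ∀ w, g w * π w = ∑ v, f v * π v * lazyWalk G v w) (hcu : π u = 2 * c * G.degree u)
    (hcN : ∀ v ∈ G.neighborFinset u, π v = 2 * c * G.degree v) :
    2 * π u * (g u - f u) ^ 2 ≤ c * ∑ v ∈ G.neighborFinset u, (f u - f v) ^ 2 := by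
  have hlin : π u * (f u - g u) = c * ∑ v ∈ G.neighborFinset u, (f u - f v) := by
    have h := hg u
    rw [sum_mul_lazyWalk (fun x => f x * π x)] at h
    have hN : ∑ x ∈ G.neighborFinset u, f x * π x * lazyWalk G x u
        = c * ∑ x ∈ G.neighborFinset u, f x := by
      rw [mul_sum]
      refine sum_congr rfl fun x hx => ?_
      rw [mul_assoc, mul_lazyWalk_of_adj ((G.mem_neighborFinset u x).mp hx).symm (hcN x hx),
        mul_comm]
    rw [sum_sub_distrib, sum_const, card_neighborFinset_eq_degree, nsmul_eq_mul]
    linear_combination -h - hN + (f u / 2) * hcu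
  have hcs : (∑ v ∈ G.neighborFinset u, (f u - f v)) ^ 2
      ≤ G.degree u * ∑ v ∈ G.neighborFinset u, (f u - f v) ^ 2 := by
    simpa using sq_sum_le_card_mul_sum_sq (s := G.neighborFinset u) (f := fun v => f u - f v)
  refine le_of_mul_le_mul_left ?_ hπu
  calc π u * (2 * π u * (g u - f u) ^ 2) = 2 * (π u * (f u - g u)) ^ 2 := by ring
    _ = 2 * c ^ 2 * (∑ v ∈ G.neighborFinset u, (f u - f v)) ^ 2 := by rw [hlin]; ring
    _ ≤ 2 * c ^ 2 * (G.degree u * ∑ v ∈ G.neighborFinset u, (f u - f v) ^ 2) := by gcongr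
    _ = π u * (c * ∑ v ∈ G.neighborFinset u, (f u - f v) ^ 2) := by rw [hcu]; ring

end LazyWalk

lemma sq_div_le_sum_sq_sub (x : ℕ → ℝ) (t : ℕ) {ε : ℝ} (hε : 0 ≤ ε)
    (hgap : ε ≤ |x t - x 0|) :
    ε ^ 2 / t ≤ ∑ i ∈ range t, (x (i + 1) - x i) ^ 2 := by
  have hcs : (x t - x 0) ^ 2 ≤ t * ∑ i ∈ range t, (x (i + 1) - x i) ^ 2 := by
    rw [← sum_range_sub]
    simpa using sq_sum_le_card_mul_sum_sq (s := range t) (f := fun i => x (i + 1) - x i)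
  refine div_le_of_le_mul₀ (Nat.cast_nonneg t) (sum_nonneg fun _ _ => sq_nonneg _) ?_
  calc ε ^ 2 ≤ |x t - x 0| ^ 2 := pow_le_pow_left₀ hε hgap 2
    _ = (x t - x 0) ^ 2 := sq_abs _
    _ ≤ _ := by linarith

lemma sum_Icc_one_eq_sum_range (F : ℕ → ℝ) (t : ℕ) :
    ∑ i ∈ Icc 1 t, F i = ∑ i ∈ range t, F (i + 1) := by
  rw [← Ico_add_one_right_eq_Icc, sum_Ico_eq_sum_range]
  simp [add_comm]

theorem stmt_9_general {V : Type*} [Fintype V] [DecidableEq V]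
    (G : ℕ → SimpleGraph V) [∀ i, DecidableRel (G i).Adj]
    (t : ℕ) (m : ℕ)
    (π : V → ℝ) (hπpos : ∀ w, 0 < π w)
    (hstat : ∀ i ∈ Finset.Icc 1 t, ∀ w, ∑ v, π v * lazyWalk (G i) v w = π w)
    (d : V → ℕ) (hdeg : ∀ i ∈ Finset.Icc 1 t, ∀ v, (G i).degree v = d v)
    (u : V) (α : ℝ)
    (hπu : π u = α * d u / (2 * m))
    (hπnbr : ∀ i ∈ Finset.Icc 1 t, ∀ v ∈ (G i).neighborFinset u,
      π v = α * d v / (2 * m))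
    (p : ℕ → V → ℝ)
    (hp : ∀ i, ∀ w, p (i + 1) w = ∑ v, p i v * lazyWalk (G (i + 1)) v w)
    (ρ : ℕ → V → ℝ) (hρ : ∀ i w, ρ i w = p i w / π w)
    (ε : ℝ) (hε : 0 < ε) (hgap : ε ≤ |ρ t u - ρ 0 u|) :
    (α / (4 * m)) * ∑ i ∈ Finset.Icc 1 t, ∑ v ∈ (G i).neighborFinset u,
        (ρ (i - 1) u - ρ (i - 1) v) ^ 2
      ≤ (∑ w, (ρ 0 w - ∑ z, ρ 0 z * π z) ^ 2 * π w)
        - (∑ w, (ρ t w - ∑ z, ρ t z * π z) ^ 2 * π w)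
    ∧ 2 * ε ^ 2 * π u / t
      ≤ (α / (4 * m)) * ∑ i ∈ Finset.Icc 1 t, ∑ v ∈ (G i).neighborFinset u,
          (ρ (i - 1) u - ρ (i - 1) v) ^ 2 := by
  set c := α / (4 * m)
  have hmem : ∀ i ∈ range t, i + 1 ∈ Icc 1 t := fun i hi => by
    simp only [mem_range, mem_Icc] at hi ⊢
    omega
  have hstep : ∀ i w, ρ (i + 1) w * π w = ∑ v, ρ i v * π v * lazyWalk (G (i + 1)) v w := by
    intro i w
    simp only [hρ, div_mul_cancel₀ _ (hπpos _).ne', hp]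
  have hcu : ∀ i ∈ range t, π u = 2 * c * (G (i + 1)).degree u := fun i hi => by
    rw [hπu, hdeg _ (hmem i hi)]
    ring
  have hcN : ∀ i ∈ range t, ∀ v ∈ (G (i + 1)).neighborFinset u,
      π v = 2 * c * (G (i + 1)).degree v := fun i hi v hv => by
    rw [hπnbr _ (hmem i hi) v hv, hdeg _ (hmem i hi)]
    ring
  rw [sum_Icc_one_eq_sum_range]
  simp only [Nat.add_sub_cancel]
  refine ⟨?_, ?_⟩
  · change c * _ ≤ weightedVariance π (ρ 0) - weightedVariance π (ρ t)
    rw [← sum_range_sub' (fun i => weightedVariance π (ρ i)), mul_sum]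
    exact sum_le_sum fun i hi =>
      lazyWalk_mul_sum_sq_le_weightedVariance_sub hπpos (hstat _ (hmem i hi)) (hstep i)
        (hcu i hi) (hcN i hi)
  · calc 2 * ε ^ 2 * π u / t = 2 * π u * (ε ^ 2 / t) := by ring
      _ ≤ 2 * π u * ∑ i ∈ range t, (ρ (i + 1) u - ρ i u) ^ 2 :=
          mul_le_mul_of_nonneg_left (sq_div_le_sum_sq_sub (fun i => ρ i u) t hε.le hgap)
            (mul_nonneg zero_le_two (hπpos u).le)
      _ ≤ ∑ i ∈ range t, c * ∑ v ∈ (G (i + 1)).neighborFinset u, (ρ i u - ρ i v) ^ 2 := by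
          rw [mul_sum]
          exact sum_le_sum fun i hi =>
            lazyWalk_two_mul_sq_sub_le (hπpos u) (hstep i) (hcu i hi) (hcN i hi)
      _ = _ := (mul_sum _ _ _).symm

theorem stmt_9 {V : Type*} [Fintype V] [DecidableEq V]
    (G : ℕ → SimpleGraph V) [∀ i, DecidableRel (G i).Adj]
    (t : ℕ) (ht : 1 ≤ t) (m : ℕ) (hm0 : 0 < m)
    (hedges : ∀ i ∈ Finset.Icc 1 t, (G i).edgeFinset.card = m)
    (π : V → ℝ) (hπpos : ∀ w, 0 < π w) (hπsum : ∑ w, π w = 1)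
    (hstat : ∀ i ∈ Finset.Icc 1 t, ∀ w, ∑ v, π v * lazyWalk (G i) v w = π w)
    (d : V → ℕ) (hdeg : ∀ i ∈ Finset.Icc 1 t, ∀ v, (G i).degree v = d v)
    (u : V) (α : ℝ) (hα : 0 ≤ α)
    (hπu : π u = α * d u / (2 * m))
    (hπnbr : ∀ i ∈ Finset.Icc 1 t, ∀ v ∈ (G i).neighborFinset u,
      π v = α * d v / (2 * m))
    (p : ℕ → V → ℝ) (hp0nonneg : ∀ w, 0 ≤ p 0 w) (hp0sum : ∑ w, p 0 w = 1)
    (hp : ∀ i, ∀ w, p (i + 1) w = ∑ v, p i v * lazyWalk (G (i + 1)) v w)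
    (ρ : ℕ → V → ℝ) (hρ : ∀ i w, ρ i w = p i w / π w)
    (ε : ℝ) (hε : 0 < ε) (hgap : ε ≤ |ρ t u - ρ 0 u|) :
    (α / (4 * m)) * ∑ i ∈ Finset.Icc 1 t, ∑ v ∈ (G i).neighborFinset u,
        (ρ (i - 1) u - ρ (i - 1) v) ^ 2
      ≤ (∑ w, (ρ 0 w - ∑ z, ρ 0 z * π z) ^ 2 * π w)
        - (∑ w, (ρ t w - ∑ z, ρ t z * π z) ^ 2 * π w)
    ∧ 2 * ε ^ 2 * π u / t
      ≤ (α / (4 * m)) * ∑ i ∈ Finset.Icc 1 t, ∑ v ∈ (G i).neighborFinset u,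
          (ρ (i - 1) u - ρ (i - 1) v) ^ 2 :=
  stmt_9_general G t m π hπpos hstat d hdeg u α hπu hπnbr p hp ρ hρ ε hε hgap
end
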